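/- arXiv:math/9910065 — 4 statements merged into one kernel-verified Lean document; each statement's English description precedes it below -/
import Mathlib

section
/- Let G be a group and C ⊆ G a normal cone whose induced relation ≥ is a partial order. Let f be a dominant and g ∈ G. Then the limit γ(f,g) = lim_{k→∞} γ_k(f,g)/k exists as a real number (the relative growth number of f with respect to g). -/
/-!
The relation `≥` is compatible with multiplication, so `f^a ≥ g^m` and `f^b ≥ g^n` give
`f^(a+b) ≥ g^(m+n)`: the sequence `γ_k` is subadditive. It is also bounded below by a linear
function of `k`: if `f^q ≥ g⁻¹` then `f^(qk) ≥ g^(-k)`, and `f^p ≥ g^k` forces `f^(p+qk) ≥ 1`,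
which by antisymmetry is only possible for `p + qk ≥ 0`. Fekete's lemma concludes.
-/

open Filter

/-- A subset `C` of a group is a *normal cone* if it contains `1`, is closed under
multiplication, and is invariant under conjugation. -/
def IsNormalCone {G : Type*} [Group G] (C : Set G) : Prop :=
  (1 : G) ∈ C ∧ (∀ f g : G, f ∈ C → g ∈ C → f * g ∈ C) ∧
    (∀ f h : G, f ∈ C → h * f * h⁻¹ ∈ C)

/-- The relation `f ≥ g` induced by the cone `C`: `f * g⁻¹ ∈ C`. -/
def ConeGe {G : Type*} [Group G] (C : Set G) (f g : G) : Prop := f * g⁻¹ ∈ C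

/-- `f` is a *dominant*: it lies in the cone, is not `1`, and some power of `f`
dominates any given element. -/
def IsDominant {G : Type*} [Group G] (C : Set G) (f : G) : Prop :=
  f ∈ C ∧ f ≠ 1 ∧ ∀ g : G, ∃ p : ℕ, ConeGe C (f ^ p) g

/-- `γ_k(f,g) = inf { p ∈ ℤ | f^p ≥ g^k }`. -/
noncomputable def gammaK {G : Type*} [Group G] (C : Set G) (f g : G) (k : ℕ) : ℤ :=
  sInf {p : ℤ | ConeGe C (f ^ p) (g ^ k)}

section ConeGe

variable {G : Type*} [Group G] {C : Set G}

-- `gammaK C f g k` unfolds to `sInf (dominatingExponents C f (g ^ k))`.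
def dominatingExponents (C : Set G) (f x : G) : Set ℤ := {p : ℤ | ConeGe C (f ^ p) x}

theorem coneGe_one_iff {a : G} : ConeGe C a 1 ↔ a ∈ C := by
  simp [ConeGe]

namespace IsNormalCone

theorem coneGe_refl (hC : IsNormalCone C) (a : G) : ConeGe C a a := by
  simpa [ConeGe] using hC.1

theorem coneGe_mul (hC : IsNormalCone C) {a b c d : G} (hab : ConeGe C a b)
    (hcd : ConeGe C c d) : ConeGe C (a * c) (b * d) := by
  have h := hC.2.1 _ _ (hC.2.2 _ a hcd) hab
  have e : a * (c * d⁻¹) * a⁻¹ * (a * b⁻¹) = a * c * (b * d)⁻¹ := by group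
  rwa [e] at h

theorem coneGe_pow (hC : IsNormalCone C) {a b : G} (hab : ConeGe C a b) (n : ℕ) :
    ConeGe C (a ^ n) (b ^ n) := by
  induction n with
  | zero => simpa using hC.coneGe_refl 1
  | succ n ih => simpa only [pow_succ] using hC.coneGe_mul ih hab

theorem pow_mem (hC : IsNormalCone C) {a : G} (ha : a ∈ C) (n : ℕ) : a ^ n ∈ C := by
  simpa [coneGe_one_iff] using hC.coneGe_pow (coneGe_one_iff.mpr ha) n

end IsNormalCone

namespace IsDominant

variable {f : G}

theorem nonneg_of_zpow_mem (hC : IsNormalCone C)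
    (hanti : ∀ f g : G, ConeGe C f g → ConeGe C g f → f = g) (hf : IsDominant C f)
    {m : ℤ} (hm : f ^ m ∈ C) : 0 ≤ m := by
  by_contra! hneg
  have hinv : f⁻¹ ∈ C := by
    have h := hC.2.1 _ _ hm (hC.pow_mem hf.1 (-m - 1).toNat)
    rwa [← zpow_natCast, Int.toNat_of_nonneg (by omega), ← zpow_add,
      show m + (-m - 1) = -1 by ring, zpow_neg_one] at h
  exact hf.2.1 (hanti f 1 (by simpa [ConeGe] using hf.1) (by simpa [ConeGe] using hinv))

theorem dominatingExponents_nonempty (hf : IsDominant C f) (x : G) :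
    (dominatingExponents C f x).Nonempty := by
  obtain ⟨p, hp⟩ := hf.2.2 x
  exact ⟨p, by simpa [dominatingExponents] using hp⟩

theorem neg_le_of_mem_dominatingExponents (hC : IsNormalCone C)
    (hanti : ∀ f g : G, ConeGe C f g → ConeGe C g f → f = g) (hf : IsDominant C f)
    {x : G} {q : ℕ} (hq : ConeGe C (f ^ q) x⁻¹) {p : ℤ} (hp : p ∈ dominatingExponents C f x) :
    -(q : ℤ) ≤ p := by
  have h := hC.coneGe_mul hp hq
  rw [mul_inv_cancel, ← zpow_natCast, ← zpow_add, coneGe_one_iff] at h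
  have := hf.nonneg_of_zpow_mem hC hanti h
  omega

theorem dominatingExponents_bddBelow (hC : IsNormalCone C)
    (hanti : ∀ f g : G, ConeGe C f g → ConeGe C g f → f = g) (hf : IsDominant C f) (x : G) :
    BddBelow (dominatingExponents C f x) := by
  obtain ⟨q, hq⟩ := hf.2.2 x⁻¹
  exact ⟨_, fun _ hp => hf.neg_le_of_mem_dominatingExponents hC hanti hq hp⟩

theorem gammaK_mem (g : G) (hC : IsNormalCone C)
    (hanti : ∀ f g : G, ConeGe C f g → ConeGe C g f → f = g) (hf : IsDominant C f) (k : ℕ) :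
    gammaK C f g k ∈ dominatingExponents C f (g ^ k) :=
  Int.csInf_mem (hf.dominatingExponents_nonempty _) (hf.dominatingExponents_bddBelow hC hanti _)

theorem gammaK_add_le (g : G) (hC : IsNormalCone C)
    (hanti : ∀ f g : G, ConeGe C f g → ConeGe C g f → f = g) (hf : IsDominant C f) (m n : ℕ) :
    gammaK C f g (m + n) ≤ gammaK C f g m + gammaK C f g n := by
  have h := hC.coneGe_mul (hf.gammaK_mem g hC hanti m) (hf.gammaK_mem g hC hanti n)
  rw [← zpow_add, ← pow_add] at h
  exact csInf_le (hf.dominatingExponents_bddBelow hC hanti _) h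

theorem neg_mul_le_gammaK (g : G) (hC : IsNormalCone C)
    (hanti : ∀ f g : G, ConeGe C f g → ConeGe C g f → f = g) (hf : IsDominant C f)
    {q : ℕ} (hq : ConeGe C (f ^ q) g⁻¹) (k : ℕ) : -((q * k : ℕ) : ℤ) ≤ gammaK C f g k := by
  have hqk := hC.coneGe_pow hq k
  rw [← pow_mul, inv_pow] at hqk
  exact hf.neg_le_of_mem_dominatingExponents hC hanti hqk (hf.gammaK_mem g hC hanti k)

end IsDominant

end ConeGe

/-- The relative growth number `γ(f,g)`, i.e. the limit of `γ_k(f,g)/k`, exists. -/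
theorem statement3 {G : Type*} [Group G] (C : Set G) (hC : IsNormalCone C)
    (hanti : ∀ f g : G, ConeGe C f g → ConeGe C g f → f = g)
    (f g : G) (hf : IsDominant C f) :
    ∃ L : ℝ, Tendsto (fun k : ℕ => (gammaK C f g k : ℝ) / (k : ℝ)) atTop (nhds L) := by
  have hsub : Subadditive (fun k : ℕ => (gammaK C f g k : ℝ)) := fun m n => by
    dsimp only
    exact_mod_cast hf.gammaK_add_le g hC hanti m n
  obtain ⟨q, hq⟩ := hf.2.2 g⁻¹
  have hbdd : BddBelow (Set.range fun k : ℕ => (gammaK C f g k : ℝ) / k) := by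
    refine ⟨-(q : ℝ), ?_⟩
    rintro _ ⟨k, rfl⟩
    rcases Nat.eq_zero_or_pos k with rfl | hk
    · simp
    · have h : (-((q * k : ℕ) : ℤ) : ℝ) ≤ gammaK C f g k := by
        exact_mod_cast hf.neg_mul_le_gammaK g hC hanti hq k
      rw [le_div_iff₀ (by exact_mod_cast hk)]
      push_cast at h
      linarith
  exact ⟨hsub.lim, hsub.tendsto_lim hbdd⟩
end

section
/- Let G be a group and C ⊆ G a normal cone whose induced relation ≥ is a partial order. Let f be a dominant and let e₁, e₂ ∈ G be commuting elements (e₁e₂ = e₂e₁). Then γ(f, e₁e₂) ≤ γ(f, e₁) + γ(f, e₂). -/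
open Filter

/-
The exponents `p` with `f ^ p ≥ g ^ k` form a set of integers which is nonempty because `f` is
dominant and bounded below because `f` has no nontrivial inverse powers in a partially ordered
cone; hence `γ_k(f, g)` is attained. Since the cone relation is compatible with products,
`f ^ γ_k(f, e₁) ≥ e₁ ^ k` and `f ^ γ_k(f, e₂) ≥ e₂ ^ k` give `f ^ (γ_k(f, e₁) + γ_k(f, e₂)) ≥
(e₁ e₂) ^ k` for commuting `e₁, e₂`, so `γ_k` is subadditive; divide by `k` and pass to the limit.
-/

section NormalCone

variable {G : Type*} [Group G] {C : Set G}

theorem IsNormalCone.pow_mem_s6 (hC : IsNormalCone C) {f : G} (hf : f ∈ C) (n : ℕ) :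
    f ^ n ∈ C := by
  induction n with
  | zero => simpa using hC.1
  | succ n ih => rw [pow_succ]; exact hC.2.1 _ _ ih hf

theorem IsNormalCone.zpow_mem (hC : IsNormalCone C) {f : G} (hf : f ∈ C) {n : ℤ}
    (hn : 0 ≤ n) : f ^ n ∈ C := by
  lift n to ℕ using hn
  rw [zpow_natCast]
  exact hC.pow_mem_s6 hf n

/-- `a b (x y)⁻¹ = (a x⁻¹) · x (b y⁻¹) x⁻¹`. -/
theorem IsNormalCone.coneGe_mul_s6 (hC : IsNormalCone C) {a b x y : G}
    (hax : ConeGe C a x) (hby : ConeGe C b y) : ConeGe C (a * b) (x * y) := by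
  have h := hC.2.1 _ _ hax (hC.2.2 _ x hby)
  unfold ConeGe at *
  convert h using 1
  group

theorem eq_one_of_mem_of_inv_mem
    (hanti : ∀ f g : G, ConeGe C f g → ConeGe C g f → f = g)
    {x : G} (hx : x ∈ C) (hx' : x⁻¹ ∈ C) : x = 1 :=
  hanti x 1 (by simpa [ConeGe] using hx) (by simpa [ConeGe] using hx')

theorem zpow_notMem_of_neg (hC : IsNormalCone C)
    (hanti : ∀ f g : G, ConeGe C f g → ConeGe C g f → f = g)
    {f : G} (hf : f ∈ C) (hf1 : f ≠ 1) {n : ℤ} (hn : n < 0) : f ^ n ∉ C := by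
  intro hfn
  have hperiod : f ^ (-n) = 1 :=
    eq_one_of_mem_of_inv_mem hanti (hC.zpow_mem hf (by omega)) (by rwa [← zpow_neg, neg_neg])
  have hfinv : f⁻¹ = f ^ (-n - 1) := by
    rw [zpow_sub_one, hperiod, one_mul]
  exact hf1 (eq_one_of_mem_of_inv_mem hanti hf (hfinv ▸ hC.zpow_mem hf (by omega)))

end NormalCone

namespace IsDominant

variable {G : Type*} [Group G] {C : Set G} {f : G}

theorem nonempty_exponents (hf : IsDominant C f) (g : G) :
    {p : ℤ | ConeGe C (f ^ p) g}.Nonempty := by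
  obtain ⟨p, hp⟩ := hf.2.2 g
  exact ⟨p, show ConeGe C (f ^ (p : ℤ)) g by rwa [zpow_natCast]⟩

/-- If `f ^ q ≥ g⁻¹`, then `f ^ p ≥ g` forces `f ^ (p + q) ≥ 1`, hence `p + q ≥ 0`. -/
theorem bddBelow_exponents (hC : IsNormalCone C)
    (hanti : ∀ f g : G, ConeGe C f g → ConeGe C g f → f = g)
    (hf : IsDominant C f) (g : G) :
    BddBelow {p : ℤ | ConeGe C (f ^ p) g} := by
  obtain ⟨q, hq⟩ := hf.2.2 g⁻¹
  refine ⟨-(q : ℤ), fun p hp => ?_⟩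
  by_contra! hlt
  have hsum := hC.coneGe_mul_s6 hp (show ConeGe C (f ^ (q : ℤ)) g⁻¹ by rwa [zpow_natCast])
  rw [← zpow_add] at hsum
  simp only [ConeGe, mul_inv_cancel, inv_one, mul_one] at hsum
  exact zpow_notMem_of_neg hC hanti hf.1 hf.2.1 (by omega) hsum

theorem coneGe_zpow_gammaK (hC : IsNormalCone C)
    (hanti : ∀ f g : G, ConeGe C f g → ConeGe C g f → f = g)
    (hf : IsDominant C f) (g : G) (k : ℕ) :
    ConeGe C (f ^ gammaK C f g k) (g ^ k) :=
  Int.csInf_mem (hf.nonempty_exponents _) (hf.bddBelow_exponents hC hanti _)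

theorem gammaK_mul_le (hC : IsNormalCone C)
    (hanti : ∀ f g : G, ConeGe C f g → ConeGe C g f → f = g)
    (hf : IsDominant C f) {e₁ e₂ : G} (hcomm : Commute e₁ e₂) (k : ℕ) :
    gammaK C f (e₁ * e₂) k ≤ gammaK C f e₁ k + gammaK C f e₂ k := by
  have hsum := hC.coneGe_mul_s6 (hf.coneGe_zpow_gammaK hC hanti e₁ k)
    (hf.coneGe_zpow_gammaK hC hanti e₂ k)
  rw [← zpow_add, ← hcomm.mul_pow] at hsum
  exact csInf_le (hf.bddBelow_exponents hC hanti _) hsum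

end IsDominant

/-- For a dominant `f` and commuting elements `e₁, e₂` one has
`γ(f, e₁e₂) ≤ γ(f, e₁) + γ(f, e₂)`. -/
theorem statement6 {G : Type*} [Group G] (C : Set G) (hC : IsNormalCone C)
    (hanti : ∀ f g : G, ConeGe C f g → ConeGe C g f → f = g)
    (f e₁ e₂ : G) (hf : IsDominant C f) (hcomm : e₁ * e₂ = e₂ * e₁)
    (L₁ L₂ L₁₂ : ℝ)
    (hL₁ : Tendsto (fun k : ℕ => (gammaK C f e₁ k : ℝ) / (k : ℝ)) atTop (nhds L₁))
    (hL₂ : Tendsto (fun k : ℕ => (gammaK C f e₂ k : ℝ) / (k : ℝ)) atTop (nhds L₂))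
    (hL₁₂ : Tendsto (fun k : ℕ => (gammaK C f (e₁ * e₂) k : ℝ) / (k : ℝ)) atTop (nhds L₁₂)) :
    L₁₂ ≤ L₁ + L₂ := by
  refine le_of_tendsto_of_tendsto' hL₁₂ (hL₁.add hL₂) fun k => ?_
  rw [← add_div]
  gcongr
  exact_mod_cast hf.gammaK_mul_le hC hanti hcomm k
end

section
/- Let f : ℝ → ℝ be a continuous monotone degree-one lift of a circle map (f is monotone, continuous, and f(x+1) = f(x)+1 for all x) such that f(x) > x for all x ∈ ℝ. For each integer k ≥ 1 let b_k = inf {p ∈ ℕ : f^p(x) ≥ x + k for all x ∈ ℝ} (this set is nonempty). Then Rot(f) > 0 and lim_{k→∞} b_k/k = 1/Rot(f). -/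
/-!
For `k ∈ ℕ`, `f ^ p` moves every point forward by at least `k` if `k < τ(f ^ p) = p τ(f)`, and
only if `k ≤ p τ(f)`. Continuity and `f x > x` give `τ(f) > 0`, so `b_k` lies in
`[k / τ(f), k / τ(f) + 1]` and `b_k / k → 1 / τ(f)`.
-/

open Filter Topology

lemma tendsto_div_natCast_of_le_of_le_add {b : ℕ → ℝ} {c C : ℝ}
    (hlow : ∀ k, c * k ≤ b k) (hup : ∀ k, b k ≤ c * k + C) :
    Tendsto (fun k : ℕ => b k / k) atTop (𝓝 c) := by
  have hC : Tendsto (fun k : ℕ => c + C / k) atTop (𝓝 c) := by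
    simpa using tendsto_const_nhds.add (tendsto_const_div_atTop_nhds_zero_nat C)
  refine tendsto_of_tendsto_of_tendsto_of_le_of_le' tendsto_const_nhds hC ?_ ?_
  · filter_upwards [eventually_gt_atTop 0] with k hk
    rw [le_div_iff₀ (Nat.cast_pos.mpr hk)]
    exact hlow k
  · filter_upwards [eventually_gt_atTop 0] with k hk
    have hk : (0 : ℝ) < k := Nat.cast_pos.mpr hk
    rw [div_le_iff₀ hk, add_mul, div_mul_cancel₀ C hk.ne']
    exact hup k

namespace CircleDeg1Lift

variable (f : CircleDeg1Lift)

def advanceTimes (k : ℝ) : Set ℕ := {p | ∀ x, x + k ≤ (f ^ p) x}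

lemma mem_advanceTimes_of_lt_mul_translationNumber {k p : ℕ}
    (h : (k : ℝ) < p * f.translationNumber) : p ∈ f.advanceTimes k := fun x =>
  ((f ^ p).lt_map_of_nat_lt_translationNumber (by rwa [translationNumber_pow]) x).le

lemma le_mul_translationNumber_of_mem_advanceTimes {k : ℝ} {p : ℕ}
    (h : p ∈ f.advanceTimes k) : k ≤ p * f.translationNumber := by
  rw [← translationNumber_pow]
  exact (f ^ p).le_translationNumber_of_add_le h

variable {f}

lemma floor_div_translationNumber_add_one_mem_advanceTimes (hτ : 0 < f.translationNumber)
    (k : ℕ) : ⌊(k : ℝ) / f.translationNumber⌋₊ + 1 ∈ f.advanceTimes k := by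
  apply mem_advanceTimes_of_lt_mul_translationNumber
  rw [← div_lt_iff₀ hτ]
  exact_mod_cast Nat.lt_floor_add_one _

lemma div_translationNumber_le_sInf_advanceTimes (hτ : 0 < f.translationNumber) (k : ℕ) :
    (k : ℝ) / f.translationNumber ≤ (sInf (f.advanceTimes k) : ℕ) := by
  rw [div_le_iff₀ hτ]
  exact f.le_mul_translationNumber_of_mem_advanceTimes
    (Nat.sInf_mem ⟨_, floor_div_translationNumber_add_one_mem_advanceTimes hτ k⟩)

lemma sInf_advanceTimes_le_div_translationNumber_add_one (hτ : 0 < f.translationNumber)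
    (k : ℕ) : ((sInf (f.advanceTimes k) : ℕ) : ℝ) ≤ k / f.translationNumber + 1 := by
  have hle := Nat.sInf_le (floor_div_translationNumber_add_one_mem_advanceTimes hτ k)
  calc ((sInf (f.advanceTimes k) : ℕ) : ℝ) ≤ ⌊(k : ℝ) / f.translationNumber⌋₊ + 1 := by
        exact_mod_cast hle
    _ ≤ k / f.translationNumber + 1 := by gcongr; exact Nat.floor_le (by positivity)

theorem tendsto_sInf_advanceTimes_div (hτ : 0 < f.translationNumber) :
    Tendsto (fun k : ℕ => ((sInf (f.advanceTimes k) : ℕ) : ℝ) / k) atTop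
      (𝓝 (1 / f.translationNumber)) :=
  tendsto_div_natCast_of_le_of_le_add (C := 1)
    (fun k => by rw [one_div_mul_eq_div]; exact div_translationNumber_le_sInf_advanceTimes hτ k)
    (fun k => by
      rw [one_div_mul_eq_div]; exact sInf_advanceTimes_le_div_translationNumber_add_one hτ k)

end CircleDeg1Lift

/-- For a continuous degree-one lift `f` of a circle map with `f(x) > x` for all `x`,
set `b_k = inf {p ∈ ℕ | ∀ x, f^p(x) ≥ x + k}`. Each of these sets is nonempty,
`Rot(f) > 0`, and `b_k / k` converges to `1 / Rot(f)`.
This expresses `γ(f,e) = 1 / Rot(f)` for the unit translation `e`. -/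
theorem statement16 (f : CircleDeg1Lift) (hf : Continuous f)
    (hpos : ∀ x : ℝ, x < f x) :
    (∀ k : ℕ, 1 ≤ k → {p : ℕ | ∀ x : ℝ, x + (k : ℝ) ≤ (f ^ p) x}.Nonempty) ∧
    0 < f.translationNumber ∧
    Tendsto
      (fun k : ℕ => ((sInf {p : ℕ | ∀ x : ℝ, x + (k : ℝ) ≤ (f ^ p) x} : ℕ) : ℝ) / (k : ℝ))
      atTop (nhds (1 / f.translationNumber)) := by
  have hτ : 0 < f.translationNumber :=
    f.lt_translationNumber_of_forall_add_lt hf fun x => by simpa using hpos x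
  exact ⟨fun k _ =>
    ⟨_, CircleDeg1Lift.floor_div_translationNumber_add_one_mem_advanceTimes hτ k⟩,
    hτ, CircleDeg1Lift.tendsto_sInf_advanceTimes_div hτ⟩
end

section
/- Let f, g : ℝ → ℝ be continuous monotone degree-one lifts of circle maps (monotone, continuous, with f(x+1) = f(x)+1 and g(x+1) = g(x)+1 for all x) such that f(x) > x and g(x) > x for all x ∈ ℝ. For each integer k ≥ 1 let c_k = inf {p ∈ ℕ : f^p(x) ≥ g^k(x) for all x ∈ ℝ} (this set is nonempty). Then lim_{k→∞} c_k/k = Rot(g)/Rot(f). -/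
/-!
Translation numbers are monotone and satisfy `τ(f^p) = p τ(f)`, so `g^k ≤ f^p` forces
`k τ(g) ≤ p τ(f)`. Conversely `|h x - x - τ(h)| < 1` for every lift `h`, so `g^k ≤ f^p` as soon
as `k τ(g) + 2 ≤ p τ(f)`. Hence `c_k τ(f) - k τ(g)` stays in `[0, 2 + τ(f)]`, and `c_k / k`
tends to `τ(g) / τ(f)`.
-/

open Filter Topology

theorem tendsto_div_natCast_of_abs_mul_sub_le {u : ℕ → ℝ} {a b C : ℝ} (hb : b ≠ 0)
    (h : ∀ k : ℕ, |u k * b - k * a| ≤ C) :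
    Tendsto (fun k : ℕ => u k / k) atTop (𝓝 (a / b)) := by
  rw [tendsto_iff_norm_sub_tendsto_zero]
  refine squeeze_zero' (Eventually.of_forall fun _ => norm_nonneg _) ?_
    (tendsto_const_div_atTop_nhds_zero_nat (C / |b|))
  filter_upwards [eventually_ge_atTop 1] with k hk
  have hk0 : (0 : ℝ) < k := by exact_mod_cast hk
  have hsplit : u k / k - a / b = (u k * b - k * a) / (k * b) := by
    field_simp
  rw [Real.norm_eq_abs, hsplit, abs_div, abs_mul, abs_of_pos hk0, div_div, mul_comm |b|]
  have := abs_pos.2 hb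
  gcongr
  exact h k

namespace CircleDeg1Lift

local notation "τ" => translationNumber

theorem add_translationNumber_sub_one_lt_map (f : CircleDeg1Lift) (x : ℝ) :
    x + τ f - 1 < f x := by
  have := f.translationNumber_le_ceil_sub x
  linarith [Int.ceil_lt_add_one (f x - x)]

theorem lt_of_translationNumber_add_two_le {f g : CircleDeg1Lift} (h : τ g + 2 ≤ τ f)
    (x : ℝ) : g x < f x := by
  linarith [g.map_lt_add_translationNumber_add_one x, f.add_translationNumber_sub_one_lt_map x]

theorem mul_translationNumber_le_of_pow_le_pow {f g : CircleDeg1Lift} {k p : ℕ}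
    (h : ∀ x, (g ^ k) x ≤ (f ^ p) x) : k * τ g ≤ p * τ f := by
  simpa only [translationNumber_pow] using translationNumber_mono h

theorem pow_le_pow_of_mul_translationNumber_add_two_le {f g : CircleDeg1Lift} {k p : ℕ}
    (h : k * τ g + 2 ≤ p * τ f) (x : ℝ) : (g ^ k) x ≤ (f ^ p) x :=
  (lt_of_translationNumber_add_two_le (by simpa only [translationNumber_pow] using h) x).le

section Domination

variable {f g : CircleDeg1Lift} (hf : 0 < τ f) (k : ℕ)
include hf

theorem ceil_mem_setOf_pow_le_pow :
    ⌈(k * τ g + 2) / τ f⌉₊ ∈ {p : ℕ | ∀ x : ℝ, (g ^ k) x ≤ (f ^ p) x} :=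
  pow_le_pow_of_mul_translationNumber_add_two_le <| (div_le_iff₀ hf).1 (Nat.le_ceil _)

theorem sInf_setOf_pow_le_pow_mul_translationNumber_le (hg : 0 ≤ τ g) :
    ((sInf {p : ℕ | ∀ x : ℝ, (g ^ k) x ≤ (f ^ p) x} : ℕ) : ℝ) * τ f ≤ k * τ g + 2 + τ f := by
  have hle := Nat.sInf_le (ceil_mem_setOf_pow_le_pow (g := g) hf k)
  have hceil := Nat.ceil_lt_add_one (by positivity : 0 ≤ (k * τ g + 2) / τ f)
  calc ((sInf {p : ℕ | ∀ x : ℝ, (g ^ k) x ≤ (f ^ p) x} : ℕ) : ℝ) * τ f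
      ≤ ((k * τ g + 2) / τ f + 1) * τ f := by gcongr; exact (Nat.cast_le.2 hle).trans hceil.le
    _ = k * τ g + 2 + τ f := by field_simp

theorem mul_translationNumber_le_sInf_setOf_pow_le_pow :
    k * τ g ≤ ((sInf {p : ℕ | ∀ x : ℝ, (g ^ k) x ≤ (f ^ p) x} : ℕ) : ℝ) * τ f :=
  mul_translationNumber_le_of_pow_le_pow (Nat.sInf_mem ⟨_, ceil_mem_setOf_pow_le_pow hf k⟩)

end Domination

end CircleDeg1Lift

theorem statement17_general (f g : CircleDeg1Lift) (hf : Continuous f)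
    (hfpos : ∀ x : ℝ, x < f x) (hgpos : ∀ x : ℝ, x < g x) :
    (∀ k : ℕ, 1 ≤ k → {p : ℕ | ∀ x : ℝ, (g ^ k) x ≤ (f ^ p) x}.Nonempty) ∧
    Tendsto
      (fun k : ℕ => ((sInf {p : ℕ | ∀ x : ℝ, (g ^ k) x ≤ (f ^ p) x} : ℕ) : ℝ) / (k : ℝ))
      atTop (nhds (g.translationNumber / f.translationNumber)) := by
  have hτf : 0 < f.translationNumber :=
    f.lt_translationNumber_of_forall_add_lt hf fun x => by simpa using hfpos x
  have hτg : 0 ≤ g.translationNumber :=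
    g.le_translationNumber_of_add_le fun x => by simpa using (hgpos x).le
  refine ⟨fun k _ => ⟨_, CircleDeg1Lift.ceil_mem_setOf_pow_le_pow hτf k⟩, ?_⟩
  refine tendsto_div_natCast_of_abs_mul_sub_le (C := 2 + f.translationNumber) hτf.ne' fun k => ?_
  rw [abs_le]
  constructor
  · linarith [CircleDeg1Lift.mul_translationNumber_le_sInf_setOf_pow_le_pow (g := g) hτf k]
  · linarith [CircleDeg1Lift.sInf_setOf_pow_le_pow_mul_translationNumber_le hτf k hτg]

/-- For continuous degree-one lifts `f, g` of circle maps with `f(x) > x` and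
`g(x) > x` for all `x`, set `c_k = inf {p ∈ ℕ | ∀ x, f^p(x) ≥ g^k(x)}`. Each of
these sets is nonempty and `c_k / k` converges to `Rot(g) / Rot(f)`.
This expresses formula (1.7.C): `γ(f,g) = Rot(g)/Rot(f)`. -/
theorem statement17 (f g : CircleDeg1Lift) (hf : Continuous f) (hg : Continuous g)
    (hfpos : ∀ x : ℝ, x < f x) (hgpos : ∀ x : ℝ, x < g x) :
    (∀ k : ℕ, 1 ≤ k → {p : ℕ | ∀ x : ℝ, (g ^ k) x ≤ (f ^ p) x}.Nonempty) ∧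
    Tendsto
      (fun k : ℕ => ((sInf {p : ℕ | ∀ x : ℝ, (g ^ k) x ≤ (f ^ p) x} : ℕ) : ℝ) / (k : ℝ))
      atTop (nhds (g.translationNumber / f.translationNumber)) :=
  statement17_general f g hf hfpos hgpos
end
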